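/- Let T be a CPTP map on H = H_S ⊕ H_R with H_S invariant, and suppose H_S decomposes as an orthogonal direct sum of T-invariant subspaces H_{S_i}. Then for each i, T*(Π_{S_i}) = Π_{S_i} + T*_{SR}(Π_{S_i}), where T*_{SR}(Π_{S_i}) = Π_R T*(Π_{S_i}) Π_R is supported on H_R. Equivalently, Π_S T*(Π_{S_i}) Π_S = Π_{S_i} and the off-diagonal blocks of T*(Π_{S_i}) with respect to H_S ⊕ H_R vanish. -/

import Mathlib

open Matrix
open scoped ComplexOrder

/-- The support `(ker X)ᗮ` of an operator. -/
noncomputable def msupp {n : Type*} [Fintype n] [DecidableEq n]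
    (X : Matrix n n ℂ) : Submodule ℂ (EuclideanSpace ℂ n) :=
  (LinearMap.ker (Matrix.toEuclideanLin X))ᗮ

variable {m b K : ℕ} {ds : Fin m → ℕ}

/-- Index type for `H = (⊕_i H_{S_i}) ⊕ H_R`. -/
abbrev Idx (ds : Fin m → ℕ) (b : ℕ) := (Σ i : Fin m, Fin (ds i)) ⊕ Fin b

/-- The orthogonal projection onto `H_{S_i}`. -/
noncomputable def PSi (ds : Fin m → ℕ) (b : ℕ) (i : Fin m) :
    Matrix (Idx ds b) (Idx ds b) ℂ :=
  Matrix.diagonal (Sum.elim (fun p => if p.1 = i then (1 : ℂ) else 0) (fun _ => 0))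

/-- The orthogonal projection onto `H_S = ⊕_i H_{S_i}`. -/
noncomputable def PS (ds : Fin m → ℕ) (b : ℕ) : Matrix (Idx ds b) (Idx ds b) ℂ :=
  Matrix.diagonal (Sum.elim (fun _ => (1 : ℂ)) (fun _ => 0))

/-- The orthogonal projection onto `H_R`. -/
noncomputable def PR (ds : Fin m → ℕ) (b : ℕ) : Matrix (Idx ds b) (Idx ds b) ℂ :=
  Matrix.diagonal (Sum.elim (fun _ => (0 : ℂ)) (fun _ => 1))

/-!
Each invariant block `Π = Π_{S_j}` forces every Kraus operator to satisfy `Π M_k Π = M_k Π`: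
the image of `Π` under the channel is supported in `ran Π`, so the positive sum
`∑ ((1 - Π) M_k Π) ((1 - Π) M_k Π)ᴴ = (1 - Π) T(Π) (1 - Π)` vanishes.
Then, with `X = T*(Π_{S_i}) = ∑ M_kᴴ Π_{S_i} M_k`, trace preservation gives `X Π_{S_i} = Π_{S_i}`,
orthogonality of the blocks gives `X Π_{S_j} = 0` for `j ≠ i`, so `X Π_S = Π_{S_i} = Π_S X`, and
expanding `X = (Π_S + Π_R) X (Π_S + Π_R)` leaves `Π_{S_i} + Π_R X Π_R`.
-/

open scoped MatrixOrder

section KrausDual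

variable {R ι : Type*} [Semiring R] [StarRing R] [Fintype ι]

/-- The Heisenberg-picture dual `T*` of the Kraus map `T ρ = ∑ k, M k * ρ * star (M k)`. -/
def krausDual (M : ι → R) (X : R) : R := ∑ k, star (M k) * X * M k

theorem star_krausDual (M : ι → R) (X : R) : star (krausDual M X) = krausDual M (star X) := by
  simp only [krausDual, star_sum, star_mul, star_star, mul_assoc]

variable {M : ι → R} {P Q : R}

theorem krausDual_mul_self (hTP : ∑ k, star (M k) * M k = 1)
    (hQ : ∀ k, Q * M k * Q = M k * Q) : krausDual M Q * Q = Q := by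
  calc krausDual M Q * Q = ∑ k, star (M k) * (Q * M k * Q) := by
        simp only [krausDual, Finset.sum_mul, mul_assoc]
    _ = (∑ k, star (M k) * M k) * Q := by simp only [hQ, Finset.sum_mul, mul_assoc]
    _ = Q := by rw [hTP, one_mul]

theorem krausDual_mul_eq_zero (hQP : Q * P = 0) (hP : ∀ k, P * M k * P = M k * P) :
    krausDual M Q * P = 0 := by
  calc krausDual M Q * P = ∑ k, star (M k) * Q * (P * M k * P) := by
        simp only [krausDual, Finset.sum_mul, hP, mul_assoc]
    _ = 0 := by simp only [mul_assoc, ← mul_assoc Q, hQP, zero_mul, mul_zero, Finset.sum_const_zero]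

end KrausDual

theorem eq_add_one_sub_mul_mul_one_sub {R : Type*} [Ring R] {X P Q : R} (hXP : X * P = Q)
    (hPX : P * X = Q) (hQP : Q * P = Q) : X = Q + (1 - P) * X * (1 - P) := by
  have hexpand : (1 - P) * X * (1 - P) = X - P * X - X * P + P * X * P := by noncomm_ring
  rw [hexpand, hPX, hXP, hQP]
  abel

section Support

variable {n ι 𝕜 : Type*} [Fintype n] [Fintype ι] [RCLike 𝕜]

theorem Matrix.eq_zero_of_sum_mul_conjTranspose_self_eq_zero {B : ι → Matrix n n 𝕜}
    (h : ∑ k, B k * (B k)ᴴ = 0) (k : ι) : B k = 0 := by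
  have hk := (Finset.sum_eq_zero_iff_of_nonneg fun k _ => mul_star_self_nonneg (B k)).1 h k
    (Finset.mem_univ k)
  exact self_mul_conjTranspose_eq_zero.1 hk

theorem IsStarProjection.mul_eq_of_range_le [DecidableEq n] {P X : Matrix n n 𝕜}
    (hP : IsStarProjection P)
    (h : LinearMap.range (toEuclideanLin X) ≤ LinearMap.range (toEuclideanLin P)) : P * X = X := by
  refine toEuclideanLin.injective (LinearMap.ext fun v => ?_)
  obtain ⟨w, hw⟩ := h ⟨v, rfl⟩
  rw [toLpLin_mul_same, LinearMap.comp_apply, ← hw, ← LinearMap.comp_apply, ← toLpLin_mul_same,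
    hP.isIdempotentElem.eq]

theorem msupp_eq_range_conjTranspose [DecidableEq n] (X : Matrix n n ℂ) :
    msupp X = LinearMap.range (toEuclideanLin Xᴴ) := by
  rw [msupp, LinearMap.orthogonal_ker, toEuclideanLin_conjTranspose_eq_adjoint]

theorem IsStarProjection.msupp_eq_range [DecidableEq n] {P : Matrix n n ℂ}
    (hP : IsStarProjection P) : msupp P = LinearMap.range (toEuclideanLin P) := by
  rw [msupp_eq_range_conjTranspose, ← star_eq_conjTranspose, hP.isSelfAdjoint.star_eq]

theorem IsStarProjection.mul_mul_eq_of_msupp_sum_le [DecidableEq n] {P : Matrix n n ℂ}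
    (hP : IsStarProjection P) {M : ι → Matrix n n ℂ}
    (h : msupp (∑ k, M k * P * (M k)ᴴ) ≤ LinearMap.range (toEuclideanLin P)) (k : ι) :
    P * M k * P = M k * P := by
  set S := ∑ k, M k * P * (M k)ᴴ
  have hS : Sᴴ = S := by
    simp only [S, conjTranspose_sum, conjTranspose_mul, conjTranspose_conjTranspose,
      ← star_eq_conjTranspose P, hP.isSelfAdjoint.star_eq, mul_assoc]
  have hPS : P * S = S := hP.mul_eq_of_range_le (hS ▸ msupp_eq_range_conjTranspose S ▸ h)
  have hcompl : (1 - P)ᴴ = 1 - P := by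
    rw [← star_eq_conjTranspose, hP.one_sub.isSelfAdjoint.star_eq]
  have hsum : ∑ k, ((1 - P) * M k * P) * ((1 - P) * M k * P)ᴴ = 0 := by
    calc ∑ k, ((1 - P) * M k * P) * ((1 - P) * M k * P)ᴴ = (1 - P) * S * (1 - P) := by
          simp only [S, Finset.mul_sum, Finset.sum_mul, conjTranspose_mul, hcompl,
            ← star_eq_conjTranspose P, hP.isSelfAdjoint.star_eq, mul_assoc,
            hP.isIdempotentElem.mul_self_mul]
      _ = 0 := by rw [sub_mul, one_mul, hPS, sub_self, zero_mul]
  have hk := eq_zero_of_sum_mul_conjTranspose_self_eq_zero hsum k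
  rw [sub_mul, sub_mul, one_mul, sub_eq_zero] at hk
  exact hk.symm

end Support

theorem isStarProjection_PSi (i : Fin m) : IsStarProjection (PSi ds b i) := by
  refine ⟨?_, ?_⟩
  · rw [IsIdempotentElem, PSi, diagonal_mul_diagonal]
    congr 1; ext (⟨j, _⟩ | _) <;> simp
  · rw [PSi, IsSelfAdjoint, star_eq_conjTranspose, diagonal_conjTranspose]
    congr 1; ext (⟨j, _⟩ | _) <;> simp

theorem isSelfAdjoint_PS : IsSelfAdjoint (PS ds b) := by
  rw [PS, IsSelfAdjoint, star_eq_conjTranspose, diagonal_conjTranspose]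
  congr 1; ext (_ | _) <;> simp

theorem PSi_mul_PSi_of_ne {i j : Fin m} (h : i ≠ j) : PSi ds b i * PSi ds b j = 0 := by
  rw [PSi, PSi, diagonal_mul_diagonal, ← diagonal_zero]
  congr 1; ext (⟨k, _⟩ | _) <;> aesop

theorem sum_PSi : ∑ i, PSi ds b i = PS ds b := by
  simp only [PSi, PS, ← diagonalAddMonoidHom_apply, ← map_sum]
  congr 1; ext (⟨k, _⟩ | _) <;> simp

theorem PSi_mul_PS (i : Fin m) : PSi ds b i * PS ds b = PSi ds b i := by
  rw [PSi, PS, diagonal_mul_diagonal]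
  congr 1; ext (_ | _) <;> simp

theorem PR_eq_one_sub_PS : PR ds b = 1 - PS ds b := by
  rw [PR, PS, ← diagonal_one, diagonal_sub]
  congr 1; ext (_ | _) <;> simp

theorem stmt_10_general (M : Fin K → Matrix (Idx ds b) (Idx ds b) ℂ)
    (hTP : ∑ k, (M k)ᴴ * M k = 1)
    (hinvSi : ∀ i : Fin m, ∀ ρ : Matrix (Idx ds b) (Idx ds b) ℂ, ρ.PosSemidef →
        msupp ρ ≤ LinearMap.range (Matrix.toEuclideanLin (PSi ds b i)) →
        msupp (∑ k, M k * ρ * (M k)ᴴ) ≤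
          LinearMap.range (Matrix.toEuclideanLin (PSi ds b i))) :
    ∀ i : Fin m,
      (∑ k, (M k)ᴴ * PSi ds b i * M k) =
        PSi ds b i + PR ds b * (∑ k, (M k)ᴴ * PSi ds b i * M k) * PR ds b := by
  intro i
  have hinv : ∀ j k, PSi ds b j * M k * PSi ds b j = M k * PSi ds b j := fun j =>
    (isStarProjection_PSi j).mul_mul_eq_of_msupp_sum_le <| hinvSi j _
      (nonneg_iff_posSemidef.1 (isStarProjection_PSi j).nonneg)
      (isStarProjection_PSi j).msupp_eq_range.le
  change krausDual M (PSi ds b i) = PSi ds b i + PR ds b * krausDual M (PSi ds b i) * PR ds b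
  have hXP : krausDual M (PSi ds b i) * PS ds b = PSi ds b i := by
    rw [← sum_PSi, Finset.mul_sum, Finset.sum_eq_single i
      (fun j _ hj => krausDual_mul_eq_zero (PSi_mul_PSi_of_ne hj.symm) (hinv j))
      (fun hi => (hi (Finset.mem_univ i)).elim)]
    exact krausDual_mul_self hTP (hinv i)
  have hPX : PS ds b * krausDual M (PSi ds b i) = PSi ds b i := by
    simpa only [star_mul, star_krausDual, isSelfAdjoint_PS.star_eq,
      (isStarProjection_PSi i).isSelfAdjoint.star_eq] using congrArg star hXP
  rw [PR_eq_one_sub_PS]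
  exact eq_add_one_sub_mul_mul_one_sub hXP hPX (PSi_mul_PS i)

/-- If `H = H_S ⊕ H_R` with `H_S = ⊕_i H_{S_i}` and each `H_{S_i}` invariant for the
CPTP map `T`, then `T*(Π_{S_i}) = Π_{S_i} + Π_R T*(Π_{S_i}) Π_R` for each `i`. -/
theorem stmt_10 (M : Fin K → Matrix (Idx ds b) (Idx ds b) ℂ)
    (hTP : ∑ k, (M k)ᴴ * M k = 1)
    (hinvS : ∀ ρ : Matrix (Idx ds b) (Idx ds b) ℂ, ρ.PosSemidef →
        msupp ρ ≤ LinearMap.range (Matrix.toEuclideanLin (PS ds b)) →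
        msupp (∑ k, M k * ρ * (M k)ᴴ) ≤ LinearMap.range (Matrix.toEuclideanLin (PS ds b)))
    (hinvSi : ∀ i : Fin m, ∀ ρ : Matrix (Idx ds b) (Idx ds b) ℂ, ρ.PosSemidef →
        msupp ρ ≤ LinearMap.range (Matrix.toEuclideanLin (PSi ds b i)) →
        msupp (∑ k, M k * ρ * (M k)ᴴ) ≤
          LinearMap.range (Matrix.toEuclideanLin (PSi ds b i))) :
    ∀ i : Fin m,
      (∑ k, (M k)ᴴ * PSi ds b i * M k) =
        PSi ds b i + PR ds b * (∑ k, (M k)ᴴ * PSi ds b i * M k) * PR ds b :=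
  stmt_10_general M hTP hinvSi
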